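/- Let X be a real normed space, D ⊆ X open and convex, f : D → ℝ locally Lipschitz, and a, b ∈ D. Then there exist t ∈ (0,1) and ζ ∈ ∂ᶜf(a + t(b−a)) such that f(b) − f(a) = ζ(b − a). -/

import Mathlib

open Filter Topology Pointwise

variable {X : Type*} [NormedAddCommGroup X] [NormedSpace ℝ X]

/-- `f` is locally Lipschitz on `D`. -/
def LocallyLipschitzOnSet {Y : Type*} [NormedAddCommGroup Y] [NormedSpace ℝ Y]
    (D : Set X) (f : X → Y) : Prop :=
  ∀ p ∈ D, ∃ K : NNReal, ∃ U ∈ 𝓝 p, LipschitzOnWith K f U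

/-- Clarke's generalized directional derivative of `f` at `p` in direction `h`. -/
noncomputable def clarkeDeriv (f : X → ℝ) (p h : X) : ℝ :=
  limsup (fun q : X × ℝ => (f (q.1 + q.2 • h) - f q.1) / q.2)
    ((𝓝 p) ×ˢ (𝓝[>] (0 : ℝ)))

/-- Clarke's generalized gradient of `f` at `p`. -/
def clarkeGradient (f : X → ℝ) (p : X) : Set (X →L[ℝ] ℝ) :=
  {ζ | ∀ h : X, ζ h ≤ clarkeDeriv f p h}

/-!
Rolle's theorem gives a local extremum `t ∈ (0, 1)` of `s ↦ f (a + s • (b - a)) - s * (f b - f a)`.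
At `p = a + t • (b - a)` either kind of extremum bounds suitable difference quotients of `f` near
`p` from below, giving `f b - f a ≤ f°(p, b - a)` and `f a - f b ≤ f°(p, a - b)`. As `f°(p, ·)` is
sublinear and at most `K * ‖·‖` for a local Lipschitz constant `K`, Hahn–Banach extends
`s • (b - a) ↦ s * (f b - f a)` to a continuous linear functional `ζ ≤ f°(p, ·)`.
-/

theorem exists_linearMap_le_sublinear_apply_eq {E : Type*} [AddCommGroup E] [Module ℝ E]
    {N : E → ℝ} (N_hom : ∀ c : ℝ, 0 < c → ∀ x, N (c • x) = c * N x)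
    (N_add : ∀ x y, N (x + y) ≤ N x + N y) {v : E} {γ : ℝ} (hv : γ ≤ N v) (hnv : -γ ≤ N (-v)) :
    ∃ ζ : E →ₗ[ℝ] ℝ, (∀ x, ζ x ≤ N x) ∧ ζ v = γ := by
  have N_zero : N 0 = 0 := by
    have := N_hom 2 two_pos 0
    rw [smul_zero] at this
    linarith
  have mul_le : ∀ c : ℝ, c * γ ≤ N (c • v) := by
    intro c
    rcases lt_trichotomy c 0 with hc | rfl | hc
    · rw [← neg_smul_neg, N_hom (-c) (neg_pos.2 hc)]
      nlinarith
    · simp [N_zero]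
    · rw [N_hom c hc]
      exact mul_le_mul_of_nonneg_left hv hc.le
  have mul_eq_zero : ∀ c : ℝ, c • v = 0 → c • γ = 0 := by
    intro c hc
    have h₁ := mul_le c
    have h₂ := mul_le (-c)
    rw [neg_smul, hc, neg_zero, N_zero] at h₂
    rw [hc, N_zero] at h₁
    rw [smul_eq_mul]
    linarith
  obtain ⟨ζ, hζ, hle⟩ := exists_extension_of_le_sublinear
    (LinearPMap.mkSpanSingleton' v γ mul_eq_zero) N N_hom N_add fun ⟨x, hx⟩ => by
      obtain ⟨c, rfl⟩ := Submodule.mem_span_singleton.1 hx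
      rw [LinearPMap.mkSpanSingleton'_apply]
      simpa using mul_le c
  exact ⟨ζ, hle, (hζ ⟨v, Submodule.mem_span_singleton_self v⟩).trans
    (LinearPMap.mkSpanSingleton'_apply_self _ _ _ _)⟩

theorem exists_continuousLinearMap_le_sublinear_apply_eq {E : Type*} [NormedAddCommGroup E]
    [NormedSpace ℝ E] {N : E → ℝ} {C : ℝ} (N_hom : ∀ c : ℝ, 0 < c → ∀ x, N (c • x) = c * N x)
    (N_add : ∀ x y, N (x + y) ≤ N x + N y) (N_le : ∀ x, N x ≤ C * ‖x‖) {v : E} {γ : ℝ}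
    (hv : γ ≤ N v) (hnv : -γ ≤ N (-v)) :
    ∃ ζ : E →L[ℝ] ℝ, (∀ x, ζ x ≤ N x) ∧ ζ v = γ := by
  obtain ⟨ζ, hle, hζv⟩ := exists_linearMap_le_sublinear_apply_eq N_hom N_add hv hnv
  refine ⟨ζ.mkContinuous C fun x => ?_, hle, hζv⟩
  have hneg := (hle (-x)).trans (N_le (-x))
  rw [map_neg, norm_neg] at hneg
  exact abs_le.2 ⟨by linarith, (hle x).trans (N_le x)⟩

section AbsBounded

variable {α : Type*} {F : Filter α} {u : α → ℝ} {C : ℝ}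

theorem isBoundedUnder_le_of_eventually_abs_le (hu : ∀ᶠ x in F, |u x| ≤ C) :
    IsBoundedUnder (· ≤ ·) F u :=
  isBoundedUnder_of_eventually_le (hu.mono fun _ hx => (abs_le.1 hx).2)

theorem isCoboundedUnder_le_of_eventually_abs_le [F.NeBot] (hu : ∀ᶠ x in F, |u x| ≤ C) :
    IsCoboundedUnder (· ≤ ·) F u :=
  (isBoundedUnder_of_eventually_ge (hu.mono fun _ hx => (abs_le.1 hx).1)).isCoboundedUnder_le

theorem limsup_comp_le_of_tendsto [F.NeBot] {m : α → α} (hu : ∀ᶠ x in F, |u x| ≤ C)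
    (hm : Tendsto m F F) : limsup (u ∘ m) F ≤ limsup u F := by
  rw [limsup_comp]
  exact limsup_le_limsup_of_le hm (isCoboundedUnder_le_of_eventually_abs_le (hm.eventually hu))
    (isBoundedUnder_le_of_eventually_abs_le hu)

end AbsBounded

theorem LocallyLipschitzOnSet.continuousOn {E Y : Type*} [NormedAddCommGroup E]
    [NormedAddCommGroup Y] [NormedSpace ℝ Y] {D : Set E} {f : E → Y}
    (hf : LocallyLipschitzOnSet D f) : ContinuousOn f D := fun p hp =>
  let ⟨_, _, hU, hL⟩ := hf p hp
  (hL.continuousOn.continuousAt hU).continuousWithinAt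

section Clarke

def clarkeFilter {E : Type*} [TopologicalSpace E] (p : E) : Filter (E × ℝ) :=
  𝓝 p ×ˢ 𝓝[>] (0 : ℝ)

instance {E : Type*} [TopologicalSpace E] (p : E) : (clarkeFilter p).NeBot := by
  unfold clarkeFilter
  infer_instance

noncomputable def clarkeQuotient (f : X → ℝ) (h : X) (q : X × ℝ) : ℝ :=
  (f (q.1 + q.2 • h) - f q.1) / q.2

theorem clarkeDeriv_eq_limsup (f : X → ℝ) (p h : X) :
    clarkeDeriv f p h = limsup (clarkeQuotient f h) (clarkeFilter p) :=
  rfl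

theorem tendsto_translate_clarkeFilter (p h : X) :
    Tendsto (fun q : X × ℝ => (q.1 + q.2 • h, q.2)) (clarkeFilter p) (clarkeFilter p) := by
  unfold clarkeFilter
  refine Tendsto.prodMk ?_ tendsto_snd
  have : Tendsto (fun q : X × ℝ => q.1 + q.2 • h) (𝓝 p ×ˢ 𝓝[>] 0) (𝓝 (p + (0 : ℝ) • h)) :=
    tendsto_fst.add ((tendsto_snd.mono_right nhdsWithin_le_nhds).smul_const h)
  simpa using this

theorem map_rescale_clarkeFilter {E : Type*} [TopologicalSpace E] (p : E) {c : ℝ} (hc : 0 < c) :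
    map (fun q : E × ℝ => (q.1, c * q.2)) (clarkeFilter p) = clarkeFilter p := by
  have hmul : map (c * ·) (𝓝[>] (0 : ℝ)) = 𝓝[>] 0 := by
    conv_lhs => rw [← comap_mulLeft_nhdsGT_zero hc]
    exact map_comap_of_surjective (mul_left_surjective₀ hc.ne') _
  unfold clarkeFilter
  calc _ = map id (𝓝 p) ×ˢ map (c * ·) (𝓝[>] 0) := prod_map_map_eq.symm
    _ = _ := by rw [map_id, hmul]

theorem clarkeQuotient_add (f : X → ℝ) (h₁ h₂ : X) (q : X × ℝ) :
    clarkeQuotient f (h₁ + h₂) q =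
      clarkeQuotient f h₁ (q.1 + q.2 • h₂, q.2) + clarkeQuotient f h₂ q := by
  simp only [clarkeQuotient, ← add_div, smul_add, add_assoc, add_comm (q.2 • h₁)]
  ring_nf

theorem clarkeQuotient_smul (f : X → ℝ) (c : ℝ) (h : X) (q : X × ℝ) :
    clarkeQuotient f (c • h) q = c * clarkeQuotient f h (q.1, c * q.2) := by
  rcases eq_or_ne c 0 with rfl | hc
  · simp [clarkeQuotient]
  rw [clarkeQuotient, clarkeQuotient, smul_smul, mul_comm q.2, mul_div_assoc',
    mul_div_mul_left _ _ hc]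

variable {f : X → ℝ} {p : X} {K : NNReal} {U : Set X}

theorem LipschitzOnWith.eventually_abs_clarkeQuotient_le (hL : LipschitzOnWith K f U)
    (hU : U ∈ 𝓝 p) (h : X) : ∀ᶠ q in clarkeFilter p, |clarkeQuotient f h q| ≤ K * ‖h‖ := by
  have hbase : ∀ᶠ q in clarkeFilter p, q.1 ∈ U := tendsto_fst.eventually hU
  have htrans : ∀ᶠ q in clarkeFilter p, q.1 + q.2 • h ∈ U :=
    (tendsto_fst.comp (tendsto_translate_clarkeFilter p h)).eventually hU
  have hpos : ∀ᶠ q in clarkeFilter p, 0 < q.2 := tendsto_snd.eventually eventually_mem_nhdsWithin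
  filter_upwards [hbase, htrans, hpos] with q hq hqh hq₂
  rw [clarkeQuotient, abs_div, abs_of_pos hq₂, div_le_iff₀ hq₂, ← Real.dist_eq]
  calc dist (f (q.1 + q.2 • h)) (f q.1) ≤ K * dist (q.1 + q.2 • h) q.1 :=
        hL.dist_le_mul _ hqh _ hq
    _ = K * ‖h‖ * q.2 := by
      rw [dist_eq_norm, add_sub_cancel_left, norm_smul, Real.norm_of_nonneg hq₂.le]
      ring

theorem LipschitzOnWith.clarkeDeriv_le (hL : LipschitzOnWith K f U) (hU : U ∈ 𝓝 p) (h : X) :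
    clarkeDeriv f p h ≤ K * ‖h‖ := by
  have hb := hL.eventually_abs_clarkeQuotient_le hU h
  exact limsup_le_of_le (isCoboundedUnder_le_of_eventually_abs_le hb)
    (hb.mono fun _ hq => (abs_le.1 hq).2)

theorem LipschitzOnWith.clarkeDeriv_add_le (hL : LipschitzOnWith K f U) (hU : U ∈ 𝓝 p)
    (h₁ h₂ : X) : clarkeDeriv f p (h₁ + h₂) ≤ clarkeDeriv f p h₁ + clarkeDeriv f p h₂ := by
  have hb₁ := hL.eventually_abs_clarkeQuotient_le hU h₁
  have hb₂ := hL.eventually_abs_clarkeQuotient_le hU h₂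
  have htr := tendsto_translate_clarkeFilter p h₂
  have hb₁' := htr.eventually hb₁
  rw [clarkeDeriv_eq_limsup, funext (clarkeQuotient_add f h₁ h₂)]
  calc limsup (fun q => clarkeQuotient f h₁ (q.1 + q.2 • h₂, q.2) + clarkeQuotient f h₂ q)
        (clarkeFilter p)
      ≤ limsup (clarkeQuotient f h₁ ∘ fun q : X × ℝ => (q.1 + q.2 • h₂, q.2)) (clarkeFilter p) +
          clarkeDeriv f p h₂ :=
        limsup_add_le (isBoundedUnder_of_eventually_ge (hb₁'.mono fun _ hq => (abs_le.1 hq).1))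
          (isBoundedUnder_le_of_eventually_abs_le hb₁')
          (isCoboundedUnder_le_of_eventually_abs_le hb₂)
          (isBoundedUnder_le_of_eventually_abs_le hb₂)
    _ ≤ clarkeDeriv f p h₁ + clarkeDeriv f p h₂ :=
        add_le_add_left (limsup_comp_le_of_tendsto hb₁ htr) _

theorem LipschitzOnWith.clarkeDeriv_smul (hL : LipschitzOnWith K f U) (hU : U ∈ 𝓝 p) {c : ℝ}
    (hc : 0 < c) (h : X) : clarkeDeriv f p (c • h) = c * clarkeDeriv f p h := by
  have hb := hL.eventually_abs_clarkeQuotient_le hU h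
  calc clarkeDeriv f p (c • h)
      = limsup (((c * ·) ∘ clarkeQuotient f h) ∘ fun q : X × ℝ => (q.1, c * q.2))
          (clarkeFilter p) := by
        rw [clarkeDeriv_eq_limsup, funext (clarkeQuotient_smul f c h)]
        rfl
    _ = limsup ((c * ·) ∘ clarkeQuotient f h) (clarkeFilter p) := by
        rw [limsup_comp, map_rescale_clarkeFilter p hc]
    _ = c * clarkeDeriv f p h :=
        ((monotone_mul_left_of_nonneg hc.le).map_limsup_of_continuousAt _
          (continuous_const_mul c).continuousAt (isBoundedUnder_le_of_eventually_abs_le hb)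
          (isCoboundedUnder_le_of_eventually_abs_le hb)).symm

theorem LipschitzOnWith.exists_mem_clarkeGradient_apply_eq (hL : LipschitzOnWith K f U)
    (hU : U ∈ 𝓝 p) {v : X} {γ : ℝ} (hv : γ ≤ clarkeDeriv f p v)
    (hnv : -γ ≤ clarkeDeriv f p (-v)) : ∃ ζ ∈ clarkeGradient f p, ζ v = γ :=
  exists_continuousLinearMap_le_sublinear_apply_eq (fun _ hc => hL.clarkeDeriv_smul hU hc)
    (hL.clarkeDeriv_add_le hU) (hL.clarkeDeriv_le hU) hv hnv

theorem LipschitzOnWith.le_clarkeDeriv_of_eventually (hL : LipschitzOnWith K f U)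
    (hU : U ∈ 𝓝 p) {h : X} {m : ℝ → X} (hm : Tendsto m (𝓝[>] 0) (𝓝 p)) {r : ℝ}
    (hr : ∀ᶠ l in 𝓝[>] 0, r * l ≤ f (m l + l • h) - f (m l)) : r ≤ clarkeDeriv f p h := by
  have hml : Tendsto (fun l => (m l, l)) (𝓝[>] 0) (clarkeFilter p) := hm.prodMk tendsto_id
  refine le_limsup_of_frequently_le (hml.frequently (Eventually.frequently ?_))
    (isBoundedUnder_le_of_eventually_abs_le (hL.eventually_abs_clarkeQuotient_le hU h))
  filter_upwards [hr, eventually_mem_nhdsWithin] with l hl hl₀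
  exact (le_div_iff₀ hl₀).2 hl

end Clarke

section LocalExtr

variable {f : X → ℝ} {a v : X} {t γ : ℝ} {K : NNReal} {U : Set X}

theorem LipschitzOnWith.le_clarkeDeriv_of_isLocalExtr (hL : LipschitzOnWith K f U)
    (hU : U ∈ 𝓝 (a + t • v)) (hext : IsLocalExtr (fun s : ℝ => f (a + s • v) - s * γ) t) :
    γ ≤ clarkeDeriv f (a + t • v) v := by
  have hid : Tendsto (fun l : ℝ => l) (𝓝[>] 0) (𝓝 0) := nhdsWithin_le_nhds
  rcases hext with hmin | hmax
  · refine hL.le_clarkeDeriv_of_eventually hU tendsto_const_nhds ?_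
    have hright : Tendsto (fun l : ℝ => t + l) (𝓝[>] 0) (𝓝 t) := by
      simpa using tendsto_const_nhds.add hid
    filter_upwards [hright.eventually hmin] with l hl
    rw [add_smul, ← add_assoc] at hl
    linarith
  · -- at a local maximum, use the quotients based at `a + (t - l) • v` that end at `a + t • v`
    have hbase : Tendsto (fun l : ℝ => a + t • v - l • v) (𝓝[>] 0) (𝓝 (a + t • v)) := by
      simpa using tendsto_const_nhds.sub (hid.smul_const v)
    refine hL.le_clarkeDeriv_of_eventually hU hbase ?_
    have hleft : Tendsto (fun l : ℝ => t - l) (𝓝[>] 0) (𝓝 t) := by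
      simpa using tendsto_const_nhds.sub hid
    filter_upwards [hleft.eventually hmax] with l hl
    rw [sub_smul, ← add_sub_assoc] at hl
    rw [sub_add_cancel]
    linarith

theorem LipschitzOnWith.neg_le_clarkeDeriv_neg_of_isLocalExtr (hL : LipschitzOnWith K f U)
    (hU : U ∈ 𝓝 (a + t • v)) (hext : IsLocalExtr (fun s : ℝ => f (a + s • v) - s * γ) t) :
    -γ ≤ clarkeDeriv f (a + t • v) (-v) := by
  have hreflect : IsLocalExtr (fun s : ℝ => f (a + s • -v) - s * -γ) (-t) := by
    rw [← neg_neg t] at hext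
    simpa [Function.comp_def] using hext.comp_continuous continuous_neg.continuousAt
  rw [← neg_smul_neg t v] at hU ⊢
  exact hL.le_clarkeDeriv_of_isLocalExtr hU hreflect

end LocalExtr

theorem lebourg_mean_value_general (D : Set X) (hDconv : Convex ℝ D)
    (f : X → ℝ) (hf : LocallyLipschitzOnSet D f) (a b : X) (ha : a ∈ D) (hb : b ∈ D) :
    ∃ t ∈ Set.Ioo (0 : ℝ) 1, ∃ ζ ∈ clarkeGradient f (a + t • (b - a)),
      f b - f a = ζ (b - a) := by
  have hseg : Set.MapsTo (fun s : ℝ => a + s • (b - a)) (Set.Icc 0 1) D :=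
    fun _ hs => hDconv.add_smul_sub_mem ha hb hs
  have hcont : ContinuousOn (fun s : ℝ => f (a + s • (b - a)) - s * (f b - f a)) (Set.Icc 0 1) :=
    (hf.continuousOn.comp (by fun_prop) hseg).sub (by fun_prop)
  obtain ⟨t, ht, hext⟩ := exists_isLocalExtr_Ioo zero_lt_one hcont (by simp)
  obtain ⟨K, U, hU, hL⟩ := hf _ (hseg (Set.Ioo_subset_Icc_self ht))
  obtain ⟨ζ, hζ, hζv⟩ := hL.exists_mem_clarkeGradient_apply_eq hU
    (hL.le_clarkeDeriv_of_isLocalExtr hU hext) (hL.neg_le_clarkeDeriv_neg_of_isLocalExtr hU hext)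
  exact ⟨t, ht, ζ, hζ, hζv.symm⟩

/-- Lebourg's mean value theorem. -/
theorem lebourg_mean_value (D : Set X) (hD : IsOpen D) (hDconv : Convex ℝ D)
    (f : X → ℝ) (hf : LocallyLipschitzOnSet D f) (a b : X) (ha : a ∈ D) (hb : b ∈ D) :
    ∃ t ∈ Set.Ioo (0 : ℝ) 1, ∃ ζ ∈ clarkeGradient f (a + t • (b - a)),
      f b - f a = ζ (b - a) :=
  lebourg_mean_value_general D hDconv f hf a b ha hb
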